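/- Let f be complex analytic on a neighborhood of (0,0) ∈ ℂ × ℂ and let α : ℂ → ℂ be analytic near 0 with α(0) = 0. Assume the functions y ↦ f_x(α(y), y) and y ↦ f_y(α(y), y) do not both vanish identically near 0, and let L ∈ ℕ be the minimum of their vanishing orders at 0. Then for every function β : ℂ → ℂ analytic near 0 with β(0) = 0 such that the vanishing order at 0 of β − α is strictly greater than L, one has min( ord₀(y ↦ f_x(β(y), y)), ord₀(y ↦ f_y(β(y), y)) ) = L. (Hence the order of the gradient of f along an arc is unchanged by adding any higher order terms of order > L, which is the key step showing that the two definitions of the contact degree d_cont and d̃_cont coincide.) -/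

import Mathlib

open Filter

/-- The vanishing order at `0` of a function `u : ℂ → ℂ`: the least `n` such that the
`n`-th Taylor coefficient of `u` at `0` is nonzero, in `ℕ∞` (`⊤` if none is). -/
noncomputable def ord₀ (u : ℂ → ℂ) : ℕ∞ :=
  sInf ((fun n : ℕ => (n : ℕ∞)) '' {n : ℕ | iteratedDeriv n u 0 ≠ 0})

/-!
The partial derivatives of `f` are analytic, hence strictly differentiable, so along two arcs
`α`, `β` their values differ by `O(β - α)` and the difference has order at least
`ord₀ (β - α) > L`. Orders of analytic functions satisfy the ultrametric inequality, so each
partial derivative has the same order along `α` and along `β` once both are truncated at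
`ord₀ (β - α)`; the minimum of the two, which is `L < ord₀ (β - α)` along `α`, is therefore
also `L` along `β`.
-/

open Topology Asymptotics

lemma natCast_le_ord₀_iff {u : ℂ → ℂ} {n : ℕ} :
    (n : ℕ∞) ≤ ord₀ u ↔ ∀ i < n, iteratedDeriv i u 0 = 0 := by
  simp only [ord₀, le_sInf_iff, Set.forall_mem_image, Set.mem_ofPred_eq, Nat.cast_le]
  exact forall_congr' fun i => by rw [not_imp_comm, not_le]

lemma ord₀_eq_analyticOrderAt {u : ℂ → ℂ} (hu : AnalyticAt ℂ u 0) :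
    ord₀ u = analyticOrderAt u 0 :=
  ENat.eq_of_forall_natCast_le_iff fun n => by
    rw [natCast_le_ord₀_iff, natCast_le_analyticOrderAt_iff_iteratedDeriv_eq_zero hu]

section AnalyticOrder

variable {𝕜 E F : Type*} [NontriviallyNormedField 𝕜] [NormedAddCommGroup E] [NormedSpace 𝕜 E]
  [NormedAddCommGroup F] [NormedSpace 𝕜 F] {f : 𝕜 → E} {g : 𝕜 → F} {z₀ : 𝕜} {n : ℕ}

lemma isBigO_norm_sub_pow_of_natCast_le_analyticOrderAt (hf : AnalyticAt 𝕜 f z₀)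
    (hn : n ≤ analyticOrderAt f z₀) : f =O[𝓝 z₀] fun z => ‖z - z₀‖ ^ n := by
  obtain ⟨g, hg, hfg⟩ := (natCast_le_analyticOrderAt hf).mp hn
  have hg_bdd : g =O[𝓝 z₀] fun _ => (1 : 𝕜) := hg.continuousAt.isBigO_one 𝕜
  have := (isBigO_refl (fun z => (z - z₀) ^ n) _).smul hg_bdd
  simp only [smul_eq_mul, mul_one] at this
  simpa only [norm_pow] using (this.congr' (EventuallyEq.symm hfg) EventuallyEq.rfl).norm_right

lemma natCast_le_analyticOrderAt_of_isBigO (hf : AnalyticAt 𝕜 f z₀)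
    (hO : f =O[𝓝 z₀] fun z => ‖z - z₀‖ ^ n) : n ≤ analyticOrderAt f z₀ := by
  by_contra! hlt
  obtain ⟨m, hm⟩ := ENat.ne_top_iff_exists.mp hlt.ne_top
  rw [← hm, Nat.cast_lt] at hlt
  obtain ⟨g, hg, hg0, hfg⟩ := hf.analyticOrderAt_eq_natCast.mp hm.symm
  have hg_inv : (fun _ => (1 : 𝕜)) =O[𝓝 z₀] g :=
    (isBigO_const_left_iff_pos_le_norm one_ne_zero).mpr ⟨‖g z₀‖ / 2,
      half_pos (norm_pos_iff.mpr hg0), (hg.continuousAt.norm.eventually_const_lt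
        (half_lt_self (norm_pos_iff.mpr hg0))).mono fun _ => le_of_lt⟩
  have hlower : (fun z => ‖z - z₀‖ ^ m) =O[𝓝 z₀] f := by
    have := (isBigO_refl (fun z => (z - z₀) ^ m) _).smul hg_inv
    simp only [smul_eq_mul, mul_one] at this
    simpa only [norm_pow] using (this.congr' EventuallyEq.rfl (EventuallyEq.symm hfg)).norm_left
  have hfreq : ∃ᶠ z in 𝓝 z₀, ‖z - z₀‖ ^ n ≠ 0 :=
    ((eventually_mem_nhdsWithin (a := z₀) (s := {z₀}ᶜ)).frequently.filter_mono
      nhdsWithin_le_nhds).mono fun _ hz => pow_ne_zero _ (norm_ne_zero_iff.mpr (sub_ne_zero.mpr hz))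
  exact (isLittleO_pow_sub_pow_sub z₀ hlt).not_isBigO hfreq (hlower.trans hO)

lemma analyticOrderAt_le_of_isBigO (hf : AnalyticAt 𝕜 f z₀) (hg : AnalyticAt 𝕜 g z₀)
    (hfg : f =O[𝓝 z₀] g) : analyticOrderAt g z₀ ≤ analyticOrderAt f z₀ :=
  ENat.forall_natCast_le_iff_le.mp fun _ hn => natCast_le_analyticOrderAt_of_isBigO hf
    (hfg.trans (isBigO_norm_sub_pow_of_natCast_le_analyticOrderAt hg hn))

lemma min_analyticOrderAt_eq_of_le_analyticOrderAt_sub {u v : 𝕜 → E} {D : ℕ∞}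
    (hD : D ≤ analyticOrderAt (v - u) z₀) :
    min (analyticOrderAt u z₀) D = min (analyticOrderAt v z₀) D := by
  have hD' : D ≤ analyticOrderAt (u - v) z₀ := by rwa [← neg_sub, analyticOrderAt_neg]
  have huv := (min_le_min_left _ hD).trans (le_analyticOrderAt_add (f := u) (g := v - u) (z₀ := z₀))
  have hvu := (min_le_min_left _ hD').trans (le_analyticOrderAt_add (f := v) (g := u - v) (z₀ := z₀))
  rw [add_sub_cancel] at huv hvu
  exact le_antisymm (le_min huv (min_le_right _ _)) (le_min hvu (min_le_right _ _))

end AnalyticOrder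

section Arcs

variable {𝕜 E : Type*} [NontriviallyNormedField 𝕜] [NormedAddCommGroup E] [NormedSpace 𝕜 E]
  {F : 𝕜 × 𝕜 → E} {α β : 𝕜 → 𝕜}

lemma analyticAt_comp_graph (hF : AnalyticAt 𝕜 F (0, 0)) (hα : AnalyticAt 𝕜 α 0)
    (hα0 : α 0 = 0) : AnalyticAt 𝕜 (fun y => F (α y, y)) 0 :=
  hF.comp_of_eq (hα.prod analyticAt_id) (by rw [hα0])

lemma tendsto_graph_nhds_zero (hα : ContinuousAt α 0) (hα0 : α 0 = 0) :
    Tendsto (fun y => (α y, y)) (𝓝 0) (𝓝 (0, 0)) := by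
  simpa [hα0] using (hα.prodMk continuousAt_id).tendsto

lemma HasStrictFDerivAt.isBigO_comp_graph_sub_comp_graph {F' : 𝕜 × 𝕜 →L[𝕜] E}
    (hF : HasStrictFDerivAt F F' (0, 0)) (hα : ContinuousAt α 0) (hα0 : α 0 = 0)
    (hβ : ContinuousAt β 0) (hβ0 : β 0 = 0) :
    (fun y => F (β y, y) - F (α y, y)) =O[𝓝 0] (β - α) := by
  have hstrict := hF.isBigO_sub.comp_tendsto
    ((tendsto_graph_nhds_zero hβ hβ0).prodMk_nhds (tendsto_graph_nhds_zero hα hα0))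
  refine hstrict.trans ?_
  simpa only [Function.comp_def, Prod.mk_sub_mk, sub_self, Pi.sub_apply] using
    (isBigO_refl (β - α) (𝓝 0)).prod_left (isBigO_zero _ _)

lemma min_analyticOrderAt_comp_graph_eq (hF : AnalyticAt 𝕜 F (0, 0)) (hα : AnalyticAt 𝕜 α 0)
    (hα0 : α 0 = 0) (hβ : AnalyticAt 𝕜 β 0) (hβ0 : β 0 = 0) :
    min (analyticOrderAt (fun y => F (α y, y)) 0) (analyticOrderAt (β - α) 0) =
      min (analyticOrderAt (fun y => F (β y, y)) 0) (analyticOrderAt (β - α) 0) :=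
  min_analyticOrderAt_eq_of_le_analyticOrderAt_sub <| analyticOrderAt_le_of_isBigO
    ((analyticAt_comp_graph hF hβ hβ0).sub (analyticAt_comp_graph hF hα hα0)) (hβ.sub hα)
    (hF.hasStrictFDerivAt.isBigO_comp_graph_sub_comp_graph hα.continuousAt hα0
      hβ.continuousAt hβ0)

end Arcs

theorem gradient_order_invariant_under_higher_order_terms_general
    (f : ℂ × ℂ → ℂ) (hf : AnalyticAt ℂ f (0, 0))
    (α : ℂ → ℂ) (hα : AnalyticAt ℂ α 0) (hα0 : α 0 = 0)
    (L : ℕ)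
    (hL : min (ord₀ (fun y => fderiv ℂ f (α y, y) (1, 0)))
              (ord₀ (fun y => fderiv ℂ f (α y, y) (0, 1))) = (L : ℕ∞)) :
    ∀ β : ℂ → ℂ, AnalyticAt ℂ β 0 → β 0 = 0 →
      (L : ℕ∞) < ord₀ (fun y => β y - α y) →
      min (ord₀ (fun y => fderiv ℂ f (β y, y) (1, 0)))
          (ord₀ (fun y => fderiv ℂ f (β y, y) (0, 1))) = (L : ℕ∞) := by
  intro β hβ hβ0 hord
  have hF (v : ℂ × ℂ) : AnalyticAt ℂ (fun p => fderiv ℂ f p v) (0, 0) :=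
    ((ContinuousLinearMap.apply ℂ ℂ v).analyticAt _).comp hf.fderiv
  have hpartial (v : ℂ × ℂ) :
      min (ord₀ fun y => fderiv ℂ f (α y, y) v) (ord₀ fun y => β y - α y) =
        min (ord₀ fun y => fderiv ℂ f (β y, y) v) (ord₀ fun y => β y - α y) := by
    rw [ord₀_eq_analyticOrderAt (analyticAt_comp_graph (hF v) hα hα0),
      ord₀_eq_analyticOrderAt (analyticAt_comp_graph (hF v) hβ hβ0),
      ord₀_eq_analyticOrderAt (u := fun y => β y - α y) (hβ.sub hα)]
    exact min_analyticOrderAt_comp_graph_eq (hF v) hα hα0 hβ hβ0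
  have htrunc : min (min (ord₀ fun y => fderiv ℂ f (β y, y) (1, 0))
      (ord₀ fun y => fderiv ℂ f (β y, y) (0, 1))) (ord₀ fun y => β y - α y) = L := by
    rw [inf_inf_distrib_right, ← hpartial, ← hpartial, ← inf_inf_distrib_right, hL,
      min_eq_left hord.le]
  exact ((min_eq_iff.mp htrunc).resolve_right fun h => hord.ne' h.1).1

/-- Let `f` be analytic near `(0,0)` and `α` analytic near `0` with
`α(0)=0`, such that `y ↦ f_x(α(y),y)` and `y ↦ f_y(α(y),y)` do not both vanish
identically near `0`; let `L` be the minimum of their vanishing orders at `0`. Then for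
every arc `β` analytic near `0` with `β(0)=0` and `ord₀(β−α) > L`, the minimum of the
vanishing orders of `y ↦ f_x(β(y),y)` and `y ↦ f_y(β(y),y)` equals `L`: the gradient
order is unchanged by adding higher order terms of order `> L`. -/
theorem gradient_order_invariant_under_higher_order_terms
    (f : ℂ × ℂ → ℂ) (hf : AnalyticAt ℂ f (0, 0))
    (α : ℂ → ℂ) (hα : AnalyticAt ℂ α 0) (hα0 : α 0 = 0)
    (hne : ¬ ((∀ᶠ y in nhds (0 : ℂ), fderiv ℂ f (α y, y) (1, 0) = 0) ∧
              (∀ᶠ y in nhds (0 : ℂ), fderiv ℂ f (α y, y) (0, 1) = 0)))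
    (L : ℕ)
    (hL : min (ord₀ (fun y => fderiv ℂ f (α y, y) (1, 0)))
              (ord₀ (fun y => fderiv ℂ f (α y, y) (0, 1))) = (L : ℕ∞)) :
    ∀ β : ℂ → ℂ, AnalyticAt ℂ β 0 → β 0 = 0 →
      (L : ℕ∞) < ord₀ (fun y => β y - α y) →
      min (ord₀ (fun y => fderiv ℂ f (β y, y) (1, 0)))
          (ord₀ (fun y => fderiv ℂ f (β y, y) (0, 1))) = (L : ℕ∞) :=
  gradient_order_invariant_under_higher_order_terms_general f hf α hα hα0 L hL
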